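/- For b > 1 and 0 < α ≤ 1, the limit L_PI = lim_{m→∞} (1/m) ∑_{j=0}^{m-1} sin(α b^{-j/m}) exists and satisfies α (log b)^{-1} ((b−1)/b − (α/π)(b²−1)/b²) ≤ L_PI ≤ α (log b)^{-1} (b−1)/b. -/

import Mathlib

open Filter Real intervalIntegral

lemma aux_int (b k : ℝ) (hb : 1 < b) (hk : 0 < k) :
    ∫ x in (0:ℝ)..1, b ^ (-(k*x)) = (1 - b ^ (-k)) / (k * Real.log b) := by
  have hb0 : (0:ℝ) < b := by linarith
  have hc : 0 < Real.log b := Real.log_pos hb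
  have hne : -(k * Real.log b) ≠ 0 := by nlinarith
  have h1 : ∀ x : ℝ, b ^ (-(k*x)) = Real.exp (-(k * Real.log b) * x) := by
    intro x
    rw [Real.rpow_def_of_pos hb0]; ring_nf
  simp only [h1]
  rw [integral_comp_mul_left (fun x => Real.exp x) hne, integral_exp]
  rw [Real.rpow_def_of_pos hb0]
  simp [smul_eq_mul]
  field_simp
  ring_nf

lemma riemann_sum_squeeze (f : ℝ → ℝ)
    (hanti : ∀ x y : ℝ, 0 ≤ x → x ≤ y → f y ≤ f x)
    (hf1 : f 0 ≤ 1) (hfnn : ∀ x : ℝ, 0 ≤ x → 0 ≤ f x)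
    (m : ℕ) (hm : 1 ≤ m) :
    (∫ x in (0:ℝ)..1, f x) ≤ (1/(m:ℝ)) * ∑ j ∈ Finset.range m, f ((j:ℝ)/m) ∧
      (1/(m:ℝ)) * ∑ j ∈ Finset.range m, f ((j:ℝ)/m) ≤ (∫ x in (0:ℝ)..1, f x) + 1/m := by
  have hm0 : (0:ℝ) < m := by exact_mod_cast hm
  have hmne : (m:ℝ) ≠ 0 := ne_of_gt hm0
  have hganti : AntitoneOn (fun x => f (x / m)) (Set.Icc (0:ℝ) (0 + (m:ℕ))) :=
    fun x hx y _ hxy => hanti _ _ (div_nonneg hx.1 hm0.le) (by gcongr)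
  have hIg : ∫ x in (0:ℝ)..((0:ℝ) + (m:ℕ)), f (x / m) = (m:ℝ) * ∫ x in (0:ℝ)..1, f x := by
    rw [integral_comp_div (c := (m:ℝ)) f hmne]
    norm_num [div_self hmne, smul_eq_mul]
  have h1 := hganti.integral_le_sum
  have h2 := hganti.sum_le_integral
  simp only [zero_add] at h1 h2 hIg
  rw [hIg] at h1 h2
  have hshift : ∑ i ∈ Finset.range m, f (((i:ℕ) + 1 : ℕ) / (m:ℝ)) =
      (∑ j ∈ Finset.range m, f ((j:ℝ)/m)) - f 0 + f ((m:ℝ)/m) := by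
    have e1 : ∑ i ∈ Finset.range (m+1), f ((i:ℝ)/m) =
        (∑ j ∈ Finset.range m, f ((j:ℝ)/m)) + f ((m:ℝ)/m) := Finset.sum_range_succ _ _
    have e2 : ∑ i ∈ Finset.range (m+1), f ((i:ℝ)/m) =
        (∑ i ∈ Finset.range m, f (((i:ℕ) + 1 : ℕ) / (m:ℝ))) + f ((0:ℝ)/m) := by
      rw [Finset.sum_range_succ']
      norm_num
    rw [e2] at e1
    rw [zero_div] at e1
    linarith
  rw [hshift] at h2
  rw [div_self hmne] at h2
  have hfm : 0 ≤ f 1 := hfnn 1 zero_le_one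
  constructor
  · rw [one_div, inv_mul_eq_div, le_div_iff₀ hm0]
    linarith
  · rw [one_div, inv_mul_eq_div, div_le_iff₀ hm0]
    have he : ((∫ x in (0:ℝ)..1, f x) + ((m:ℝ))⁻¹) * m = (∫ x in (0:ℝ)..1, f x) * m + 1 := by
      field_simp
    rw [he]
    linarith

theorem pi_limit_constant_bounds (b α : ℝ) (hb : 1 < b) (hα0 : 0 < α) (hα1 : α ≤ 1) :
    ∃ L : ℝ,
      Tendsto (fun m : ℕ => (1 / (m : ℝ)) * ∑ j ∈ Finset.range m,
          Real.sin (α * b ^ (-(j : ℝ) / m))) atTop (nhds L) ∧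
      α * (Real.log b)⁻¹ * ((b - 1) / b - α / Real.pi * ((b ^ 2 - 1) / b ^ 2)) ≤ L ∧
      L ≤ α * (Real.log b)⁻¹ * ((b - 1) / b) := by
  have hb0 : (0:ℝ) < b := by linarith
  have hc : 0 < Real.log b := Real.log_pos hb
  have hπ := Real.pi_pos
  have hπ4 := Real.pi_le_four
  have hπ3 := Real.pi_gt_three
  have targ : ∀ u : ℝ, 0 ≤ u → 0 < α * b ^ (-u) ∧ α * b ^ (-u) ≤ α := by
    intro u hu
    have h1 : (0:ℝ) < b ^ (-u) := Real.rpow_pos_of_pos hb0 _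
    have h2 : b ^ (-u) ≤ 1 := Real.rpow_le_one_of_one_le_of_nonpos hb.le (by linarith)
    constructor
    · positivity
    · nlinarith
  have hanti : ∀ x y : ℝ, 0 ≤ x → x ≤ y →
      Real.sin (α * b ^ (-y)) ≤ Real.sin (α * b ^ (-x)) := by
    intro x y hx hxy
    have hy : 0 ≤ y := le_trans hx hxy
    have harg : α * b ^ (-y) ≤ α * b ^ (-x) := by
      have := Real.rpow_le_rpow_of_exponent_le hb.le (neg_le_neg hxy)
      nlinarith
    have h1 := targ x hx
    have h2 := targ y hy
    exact Real.strictMonoOn_sin.monotoneOn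
      ⟨by linarith, by linarith⟩ ⟨by linarith, by linarith⟩ harg
  have hgc : Continuous fun x : ℝ => b ^ (-x) := by
    have : (fun x : ℝ => b ^ (-x)) = fun x => Real.exp (Real.log b * (-x)) := by
      funext x; rw [Real.rpow_def_of_pos hb0]
    rw [this]; fun_prop
  have hg2c : Continuous fun x : ℝ => b ^ (-(2*x)) := by
    have : (fun x : ℝ => b ^ (-(2*x))) = fun x => Real.exp (Real.log b * (-(2*x))) := by
      funext x; rw [Real.rpow_def_of_pos hb0]
    rw [this]; fun_prop
  have hcont : Continuous fun u : ℝ => Real.sin (α * b ^ (-u)) := by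
    have : (fun u : ℝ => Real.sin (α * b ^ (-u)))
        = fun u => Real.sin (α * Real.exp (Real.log b * (-u))) := by
      funext u; rw [Real.rpow_def_of_pos hb0]
    rw [this]; fun_prop
  set L : ℝ := ∫ x in (0:ℝ)..1, Real.sin (α * b ^ (-x)) with hL
  have key := fun (m : ℕ) (hm : 1 ≤ m) =>
    riemann_sum_squeeze (fun u => Real.sin (α * b ^ (-u))) hanti
      (Real.sin_le_one _)
      (fun x hx => Real.sin_nonneg_of_nonneg_of_le_pi (targ x hx).1.le
        (by have := (targ x hx).2; linarith)) m hm
  simp only [← hL] at key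
  clear_value L
  -- convergence
  have htend : Tendsto (fun m : ℕ => (1 / (m : ℝ)) * ∑ j ∈ Finset.range m,
      Real.sin (α * b ^ (-(j : ℝ) / m))) atTop (nhds L) := by
    have hnd : ∀ j : ℕ, ∀ m : ℕ, (-(j:ℝ))/(m:ℝ) = -((j:ℝ)/(m:ℝ)) := fun j m => neg_div _ _
    simp_rw [hnd]
    have hup : Tendsto (fun m : ℕ => L + 1/(m:ℝ)) atTop (nhds L) := by
      have h1 : Tendsto (fun _ : ℕ => L) atTop (nhds L) := tendsto_const_nhds
      have h0 : Tendsto (fun m : ℕ => 1/(m:ℝ)) atTop (nhds 0) :=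
        tendsto_one_div_atTop_nhds_zero_nat
      simpa using h1.add h0
    refine tendsto_of_tendsto_of_tendsto_of_le_of_le' tendsto_const_nhds hup ?_ ?_
    · filter_upwards [eventually_ge_atTop 1] with m hm using (key m hm).1
    · filter_upwards [eventually_ge_atTop 1] with m hm using (key m hm).2
  -- integrability
  have hintf : IntervalIntegrable (fun u : ℝ => Real.sin (α * b ^ (-u)))
      MeasureTheory.volume 0 1 := hcont.intervalIntegrable _ _
  have hintu : IntervalIntegrable (fun x => α * b ^ (-x)) MeasureTheory.volume 0 1 :=
    (continuous_const.mul hgc).intervalIntegrable _ _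
  have hintl : IntervalIntegrable (fun x => α * b ^ (-x) - α^2/Real.pi * b ^ (-(2*x)))
      MeasureTheory.volume 0 1 :=
    ((continuous_const.mul hgc).sub (continuous_const.mul hg2c)).intervalIntegrable _ _
  -- J1 and J2
  have hJ1 : ∫ x in (0:ℝ)..1, b ^ (-x) = (1 - b⁻¹) / Real.log b := by
    have := aux_int b 1 hb one_pos
    simp only [one_mul] at this
    rw [this, Real.rpow_neg_one]
  have hb2 : b ^ (-(2:ℝ)) = (b^2)⁻¹ := by
    rw [show (-(2:ℝ)) = ((-2 : ℤ) : ℝ) by norm_num, Real.rpow_intCast]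
    simp [zpow_neg]
  have hJ2 : ∫ x in (0:ℝ)..1, b ^ (-(2*x)) = (1 - (b^2)⁻¹) / (2 * Real.log b) := by
    have := aux_int b 2 hb two_pos
    rw [this, hb2]
  -- upper bound
  have hL_up : L ≤ α * ((1 - b⁻¹) / Real.log b) := by
    have h := intervalIntegral.integral_mono_on (by norm_num : (0:ℝ) ≤ 1) hintf hintu
      (fun x hx => Real.sin_le (targ x hx.1).1.le)
    rw [hL]
    calc (∫ x in (0:ℝ)..1, Real.sin (α * b ^ (-x))) ≤ ∫ x in (0:ℝ)..1, α * b ^ (-x) := h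
      _ = α * ((1 - b⁻¹) / Real.log b) := by
          rw [intervalIntegral.integral_const_mul, hJ1]
  -- lower bound
  have hL_lo : α * ((1 - b⁻¹) / Real.log b)
      - α^2/Real.pi * ((1 - (b^2)⁻¹) / (2 * Real.log b)) ≤ L := by
    have hpt : ∀ x ∈ Set.Icc (0:ℝ) 1,
        α * b ^ (-x) - α^2/Real.pi * b ^ (-(2*x)) ≤ Real.sin (α * b ^ (-x)) := by
      intro x hx
      have ht := targ x hx.1
      set t := α * b ^ (-x) with htdef
      have ht1 : t ≤ 1 := le_trans ht.2 hα1
      have hcube : t - t^3/4 < Real.sin t := by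
        have := Real.sin_gt_sub_cube ht.1; nlinarith [pow_pos ht.1 3]
      have hsq : b ^ (-(2*x)) = (b ^ (-x))^2 := by
        rw [← Real.rpow_natCast (b ^ (-x)) 2, ← Real.rpow_mul hb0.le]
        norm_num
        ring_nf
      have heq : α * b ^ (-x) - α^2/Real.pi * b ^ (-(2*x)) = t - t^2/Real.pi := by
        rw [hsq, htdef]; ring
      rw [heq]
      have hkey : t^3/4 ≤ t^2/Real.pi := by
        rw [div_le_div_iff₀ (by norm_num) hπ]
        have h2 : t^3 ≤ t^2 := by nlinarith [mul_nonneg (sq_nonneg t) (sub_nonneg.mpr ht1)]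
        nlinarith [pow_pos ht.1 3]
      linarith
    have h := intervalIntegral.integral_mono_on (by norm_num : (0:ℝ) ≤ 1) hintl hintf hpt
    rw [hL]
    calc α * ((1 - b⁻¹) / Real.log b) - α^2/Real.pi * ((1 - (b^2)⁻¹) / (2 * Real.log b))
        = ∫ x in (0:ℝ)..1, (α * b ^ (-x) - α^2/Real.pi * b ^ (-(2*x))) := by
          rw [intervalIntegral.integral_sub (f := fun x => α * b ^ (-x)) (g := fun x => α^2/Real.pi * b ^ (-(2*x)))
            ((continuous_const.mul hgc).intervalIntegrable _ _)
            ((continuous_const.mul hg2c).intervalIntegrable _ _),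
            intervalIntegral.integral_const_mul, intervalIntegral.integral_const_mul,
            hJ1, hJ2]
      _ ≤ ∫ x in (0:ℝ)..1, Real.sin (α * b ^ (-x)) := h
  -- final algebra
  refine ⟨L, htend, ?_, ?_⟩
  · have hb21 : (0:ℝ) ≤ b^2 - 1 := by nlinarith
    have hD : 0 ≤ α^2/Real.pi * ((b^2-1) / (b^2 * Real.log b)) := by positivity
    have e1 : α * (Real.log b)⁻¹ * ((b - 1) / b - α / Real.pi * ((b ^ 2 - 1) / b ^ 2))
        = α * ((1 - b⁻¹) / Real.log b) - α^2/Real.pi * ((b^2-1) / (b^2 * Real.log b)) := by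
      field_simp
    have e2 : α * ((1 - b⁻¹) / Real.log b)
        - α^2/Real.pi * ((1 - (b^2)⁻¹) / (2 * Real.log b))
        = α * ((1 - b⁻¹) / Real.log b)
        - (α^2/Real.pi * ((b^2-1) / (b^2 * Real.log b))) / 2 := by
      field_simp
    rw [e1]
    rw [e2] at hL_lo
    linarith
  · have e : α * (Real.log b)⁻¹ * ((b - 1) / b) = α * ((1 - b⁻¹) / Real.log b) := by
      have h : 1 - b⁻¹ = (b-1)/b := by field_simp
      rw [h]; ring
    rw [e]
    exact hL_up
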